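/- Given a μ-free term t over nonterminals X, a set Z ⊆ X of variables, and an assignment φ : X → guarded μ-expressions, there exists a Z-pseudoclosure t' of t with respect to φ, i.e., a term obtainable from t by a chain of single syntactic substitutions whose free variables all lie in Z. -/

import Mathlib

/-- μ-expressions over constants `K` and alphabet `A`, with variables named by
natural numbers: `t ::= k̄ | x | ā | t + t | t × t | μx.g`. -/
inductive Mu (K A : Type) : Type
  | const (k : K) : Mu K A
  | var (n : ℕ) : Mu K A
  | ltr (a : A) : Mu K A
  | add (s t : Mu K A) : Mu K A
  | mul (s t : Mu K A) : Mu K A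
  | mu (n : ℕ) (g : Mu K A) : Mu K A

namespace Mu

/-- Substitution `t[s/x]` of a term `s` for all free occurrences of variable `n`. -/
def subst {K A : Type} : Mu K A → ℕ → Mu K A → Mu K A
  | const k, _, _ => const k
  | ltr a, _, _ => ltr a
  | var m, n, s => if m = n then s else var m
  | add u v, n, s => add (u.subst n s) (v.subst n s)
  | mul u v, n, s => mul (u.subst n s) (v.subst n s)
  | mu m g, n, s => if m = n then mu m g else mu m (g.subst n s)

/-- Guarded terms `g ::= ā × t | k̄ | g + g`. -/
inductive Guarded {K A : Type} : Mu K A → Prop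
  | const (k : K) : Guarded (const k)
  | mul (a : A) (t : Mu K A) : Guarded (mul (ltr a) t)
  | add {g₁ g₂ : Mu K A} : Guarded g₁ → Guarded g₂ → Guarded (add g₁ g₂)

/-- Free variables of a μ-expression. -/
def fv {K A : Type} : Mu K A → Set ℕ
  | const _ => ∅
  | ltr _ => ∅
  | var n => {n}
  | add u v => u.fv ∪ v.fv
  | mul u v => u.fv ∪ v.fv
  | mu n g => g.fv \ {n}

/-- A μ-expression is closed if it has no free variables. -/
def Closed {K A : Type} (t : Mu K A) : Prop := t.fv = ∅

/-- μ-free terms (elements of the term algebra `T_K(X)`). -/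
def MuFree {K A : Type} : Mu K A → Prop
  | const _ => True
  | ltr _ => True
  | var _ => True
  | add u v => u.MuFree ∧ v.MuFree
  | mul u v => u.MuFree ∧ v.MuFree
  | mu _ _ => False

end Mu

/-- A bisimulation between `K × (−)^A`-coalgebras. -/
def IsBisim {α β A K : Type} (o₁ : α → K) (d₁ : α → A → α)
    (o₂ : β → K) (d₂ : β → A → β) (R : α → β → Prop) : Prop :=
  ∀ x y, R x y → o₁ x = o₂ y ∧ ∀ a, R (d₁ x a) (d₂ y a)

/-- Bisimilarity: the union of all bisimulations. -/
def Bisimilar {α β A K : Type} (o₁ : α → K) (d₁ : α → A → α)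
    (o₂ : β → K) (d₂ : β → A → β) (x : α) (y : β) : Prop :=
  ∃ R, IsBisim o₁ d₁ o₂ d₂ R ∧ R x y

/-- A single syntactic substitution (w.r.t. an assignment `φ` of guarded
μ-expressions to variables): one occurrence of the variable `x` (free or
bound) is replaced by `μx.φ(x)`. -/
inductive SingleSub {K A : Type} (φ : ℕ → Mu K A) : Mu K A → Mu K A → Prop
  | var (n : ℕ) : SingleSub φ (.var n) (.mu n (φ n))
  | addl {s s' : Mu K A} (u : Mu K A) :
      SingleSub φ s s' → SingleSub φ (.add s u) (.add s' u)
  | addr {s s' : Mu K A} (u : Mu K A) :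
      SingleSub φ s s' → SingleSub φ (.add u s) (.add u s')
  | mull {s s' : Mu K A} (u : Mu K A) :
      SingleSub φ s s' → SingleSub φ (.mul s u) (.mul s' u)
  | mulr {s s' : Mu K A} (u : Mu K A) :
      SingleSub φ s s' → SingleSub φ (.mul u s) (.mul u s')
  | mu {u u' : Mu K A} (n : ℕ) :
      SingleSub φ u u' → SingleSub φ (.mu n u) (.mu n u')

/-- `t'` is obtainable from `t` by a chain of single syntactic substitutions. -/
def Chain {K A : Type} (φ : ℕ → Mu K A) : Mu K A → Mu K A → Prop :=
  Relation.ReflTransGen (SingleSub φ)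

/-
Strong induction on `|V \ Z|` and, inside it, structural induction on the term, for all `Z` at
once. Under a binder `μm.g` it suffices to close `g` relative to `Z ∪ {m}`, which does not
increase `|V \ Z|`. A free variable `n ∉ Z` is unfolded to `μn.φ(n)`, and it remains to close
`φ(n)` relative to `Z ∪ {n}`: as `n ∈ V` this strictly decreases `|V \ Z|`, and as the free
variables of `φ(n)` lie in `V`, the invariant `fv ⊆ V ∪ Z` survives.
-/

namespace Chain

open Relation

variable {K A : Type} {φ : ℕ → Mu K A}

theorem mu {u u' : Mu K A} (n : ℕ) (h : Chain φ u u') : Chain φ (.mu n u) (.mu n u') :=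
  ReflTransGen.lift (Mu.mu n) (fun _ _ => SingleSub.mu n) _ _ h

theorem add {s s' u u' : Mu K A} (hs : Chain φ s s') (hu : Chain φ u u') :
    Chain φ (.add s u) (.add s' u') :=
  (ReflTransGen.lift (fun x : Mu K A => x.add u) (fun _ _ => SingleSub.addl u) _ _ hs).trans
    (ReflTransGen.lift (fun x : Mu K A => s'.add x) (fun _ _ => SingleSub.addr s') _ _ hu)

theorem mul {s s' u u' : Mu K A} (hs : Chain φ s s') (hu : Chain φ u u') :
    Chain φ (.mul s u) (.mul s' u') :=
  (ReflTransGen.lift (fun x : Mu K A => x.mul u) (fun _ _ => SingleSub.mull u) _ _ hs).trans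
    (ReflTransGen.lift (fun x : Mu K A => s'.mul x) (fun _ _ => SingleSub.mulr s') _ _ hu)

end Chain

def IsPseudoclosure {K A : Type} (φ : ℕ → Mu K A) (Z : Set ℕ) (t t' : Mu K A) : Prop :=
  Chain φ t t' ∧ t'.fv ⊆ Z

namespace IsPseudoclosure

variable {K A : Type} {φ : ℕ → Mu K A} {Z : Set ℕ}

theorem refl {t : Mu K A} (ht : t.fv ⊆ Z) : IsPseudoclosure φ Z t t :=
  ⟨Relation.ReflTransGen.refl, ht⟩

theorem add {s s' u u' : Mu K A} (hs : IsPseudoclosure φ Z s s')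
    (hu : IsPseudoclosure φ Z u u') : IsPseudoclosure φ Z (.add s u) (.add s' u') :=
  ⟨hs.1.add hu.1, Set.union_subset hs.2 hu.2⟩

theorem mul {s s' u u' : Mu K A} (hs : IsPseudoclosure φ Z s s')
    (hu : IsPseudoclosure φ Z u u') : IsPseudoclosure φ Z (.mul s u) (.mul s' u') :=
  ⟨hs.1.mul hu.1, Set.union_subset hs.2 hu.2⟩

theorem mu {m : ℕ} {g g' : Mu K A} (hg : IsPseudoclosure φ (insert m Z) g g') :
    IsPseudoclosure φ Z (.mu m g) (.mu m g') :=
  ⟨hg.1.mu m, fun _ hx => (hg.2 hx.1).resolve_left hx.2⟩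

theorem var {n : ℕ} {g' : Mu K A} (hg : IsPseudoclosure φ (insert n Z) (φ n) g') :
    IsPseudoclosure φ Z (.var n) (.mu n g') :=
  ⟨.head (SingleSub.var n) (hg.1.mu n), (mu hg).2⟩

end IsPseudoclosure

theorem exists_isPseudoclosure_of_fv_subset {K A : Type} {V : Finset ℕ}
    {φ : ℕ → Mu K A} (hφ : ∀ n ∈ V, (φ n).fv ⊆ ↑V) (Z : Finset ℕ) {t : Mu K A}
    (ht : t.fv ⊆ ↑(V ∪ Z)) :
    ∃ t', IsPseudoclosure φ Z t t' := by
  obtain ⟨k, hk⟩ : ∃ k, (V \ Z).card ≤ k := ⟨_, le_rfl⟩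
  induction k using Nat.strong_induction_on generalizing Z t with
  | _ k outer =>
  induction t generalizing Z with
  | const c => exact ⟨_, .refl (by simp [Mu.fv])⟩
  | ltr a => exact ⟨_, .refl (by simp [Mu.fv])⟩
  | var n =>
    by_cases hnZ : n ∈ Z
    · exact ⟨_, .refl (by simpa [Mu.fv])⟩
    have hnV : n ∈ V := by simpa [Mu.fv, hnZ] using ht
    have hfewer : (V \ insert n Z).card < k := by
      rw [Finset.sdiff_insert]
      exact (Finset.card_erase_lt_of_mem (Finset.mem_sdiff.2 ⟨hnV, hnZ⟩)).trans_le hk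
    obtain ⟨g', hg'⟩ := outer _ hfewer (insert n Z)
      ((hφ n hnV).trans (Finset.coe_subset.2 Finset.subset_union_left)) le_rfl
    exact ⟨_, .var (by simpa using hg')⟩
  | add s u ihs ihu =>
    obtain ⟨s', hs'⟩ := ihs Z (fun _ hx => ht (.inl hx)) hk
    obtain ⟨u', hu'⟩ := ihu Z (fun _ hx => ht (.inr hx)) hk
    exact ⟨_, hs'.add hu'⟩
  | mul s u ihs ihu =>
    obtain ⟨s', hs'⟩ := ihs Z (fun _ hx => ht (.inl hx)) hk
    obtain ⟨u', hu'⟩ := ihu Z (fun _ hx => ht (.inr hx)) hk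
    exact ⟨_, hs'.mul hu'⟩
  | mu m g ihg =>
    have hgfv : g.fv ⊆ ↑(V ∪ insert m Z) := fun x hx => by
      by_cases hxm : x = m
      · simp [hxm]
      · simpa [or_left_comm] using Or.inr (ht ⟨hx, hxm⟩)
    have hnotmore : (V \ insert m Z).card ≤ k := by
      rw [Finset.sdiff_insert]
      exact Finset.card_erase_le.trans hk
    obtain ⟨g', hg'⟩ := ihg (insert m Z) hgfv hnotmore
    exact ⟨_, .mu (by simpa using hg')⟩

theorem pseudoclosure_exists_general {K A : Type} (V Z : Finset ℕ)
    (φ : ℕ → Mu K A)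
    (hfv : ∀ n ∈ V, (φ n).fv ⊆ ↑V)
    (t : Mu K A) (htfv : t.fv ⊆ ↑V) :
    ∃ t', Chain φ t t' ∧ t'.fv ⊆ ↑Z :=
  exists_isPseudoclosure_of_fv_subset hfv Z (htfv.trans (by simp))

/-- Given a μ-free term `t` over a finite set `V` of nonterminals, a set
`Z ⊆ V` of variables, and an assignment `φ` of guarded μ-expressions (over `V`)
to the variables, there exists a `Z`-pseudoclosure of `t`: a term obtainable
from `t` by a chain of single syntactic substitutions whose free variables all
lie in `Z`. -/
theorem pseudoclosure_exists {K A : Type} (V Z : Finset ℕ) (hZV : Z ⊆ V)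
    (φ : ℕ → Mu K A)
    (hguard : ∀ n ∈ V, (φ n).Guarded)
    (hfv : ∀ n ∈ V, (φ n).fv ⊆ ↑V)
    (t : Mu K A) (hmufree : t.MuFree) (htfv : t.fv ⊆ ↑V) :
    ∃ t', Chain φ t t' ∧ t'.fv ⊆ ↑Z :=
  pseudoclosure_exists_general V Z φ hfv t htfv
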